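/- Under the construction setup with 2 ≤ r ≤ 𝔫, set δ := 𝔫 − r + 1 and let C be the evaluation code on Z_f ⊕ Z_g of the F-subspace { w ∈ span_F(B_{r²}) : deg(w) ≤ (2r−3)·𝔫 }. Then C has dimension r² − 1 and minimum distance exactly δ(δ+1). -/

import Mathlib

/-!
For `β ∈ Z_f` and `γ ∈ Z_g` additivity of `f` gives `f(β + γ) = γ` and `g(β + γ) = β`, so
`α ↦ (g α, f α)` identifies `Z_f ⊕ Z_g` with the grid `Z_f × Z_g`, and `∑ c_{ij} g^i f^j`
evaluates at `β + γ` to `∑ c_{ij} β^i γ^j`. Comparing coefficients of `X^{(2r-2)𝔫}`, the degree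
bound removes exactly the corner `g^{r-1} f^{r-1}`: the code is the evaluation code on an
`𝔫 × 𝔫` grid of the bivariate polynomials with exponents in `[0, r)²` minus the corner.
A nonzero bivariate polynomial of `Y`-degree `b` whose leading coefficient has degree `a` is
nonzero at no fewer than `(𝔫 - a)(𝔫 - b)` grid points, and `a, b < r`, `(a, b) ≠ (r-1, r-1)`
make this at least `δ(δ+1)`. In particular evaluation is injective, giving dimension `r² - 1`,
and `∏_{t ∈ T} (g - t) · ∏_{s ∈ U} (f - s)` with `T ⊆ Z_f`, `U ⊆ Z_g` of sizes `r - 1`,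
`r - 2` attains the bound.
-/

open Polynomial
open scoped Classical

/-- The point set `Z_f ⊕ Z_g = {β + γ : β ∈ Z_f, γ ∈ Z_g}`. -/
noncomputable def rootSumSet {F : Type*} [Field F] (f g : F[X]) : Finset F :=
  (f.roots.toFinset ×ˢ g.roots.toFinset).image fun p => p.1 + p.2

/-- The set `B_{r²} = {g^i f^j : 0 ≤ i, j ≤ r-1}` of polynomials. -/
def Bset {F : Type*} [Field F] (f g : F[X]) (r : ℕ) : Set F[X] :=
  {w | ∃ i j : ℕ, i < r ∧ j < r ∧ w = g ^ i * f ^ j}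

/-- The linear evaluation map `F[X] → (S → F)` on a finite set `S` of points. -/
noncomputable def evalOn {F : Type*} [Field F] (S : Finset F) : F[X] →ₗ[F] (↥S → F) :=
  LinearMap.pi fun α => Polynomial.leval (α : F)

open Finset

section Bivariate

variable {R : Type*} [CommRing R]

/-- The bivariate polynomial `∑_{(i,j) ∈ J} c (i,j) X^i Y^j`, with `Y` the outer variable. -/
noncomputable def bivariateOfCoeffs (J : Finset (ℕ × ℕ)) (c : ℕ × ℕ → R) : R[X][X] :=
  ∑ k ∈ J, monomial k.2 (monomial k.1 (c k))

theorem coeff_coeff_bivariateOfCoeffs (J : Finset (ℕ × ℕ)) (c : ℕ × ℕ → R) (i j : ℕ) :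
    ((bivariateOfCoeffs J c).coeff j).coeff i = if (i, j) ∈ J then c (i, j) else 0 := by
  simp only [bivariateOfCoeffs, finsetSum_coeff, coeff_monomial]
  rw [← sum_ite_eq' J (i, j) c]
  refine sum_congr rfl fun ⟨a, b⟩ _ => ?_
  by_cases hb : b = j <;> by_cases ha : a = i <;> simp [ha, hb, coeff_monomial]

theorem eval_sum_smul_pow_mul_pow (J : Finset (ℕ × ℕ)) (c : ℕ × ℕ → R) (f g : R[X])
    (x : R) :
    (∑ k ∈ J, c k • (g ^ k.1 * f ^ k.2)).eval x =
      (bivariateOfCoeffs J c).evalEval (g.eval x) (f.eval x) := by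
  simp [bivariateOfCoeffs, eval_finsetSum, evalEval, eval_monomial, mul_assoc]

theorem comp_mul_comp_mem_span_image (f g p₁ p₂ : R[X]) {J : Finset (ℕ × ℕ)}
    (hJ : ∀ i ≤ p₁.natDegree, ∀ j ≤ p₂.natDegree, (i, j) ∈ J) :
    p₁.comp g * p₂.comp f ∈
      Submodule.span R ((fun k : ℕ × ℕ => g ^ k.1 * f ^ k.2) '' J) := by
  rw [comp, comp, eval₂_eq_sum_range, eval₂_eq_sum_range, sum_mul_sum]
  refine Submodule.sum_mem _ fun i hi => Submodule.sum_mem _ fun j hj => ?_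
  rw [mem_range, Nat.lt_succ_iff] at hi hj
  have hterm : C (p₁.coeff i) * g ^ i * (C (p₂.coeff j) * f ^ j) =
      (p₁.coeff i * p₂.coeff j) • (g ^ i * f ^ j) := by
    rw [smul_eq_C_mul, C_mul]; ring
  rw [hterm]
  exact Submodule.smul_mem _ _ (Submodule.subset_span ⟨(i, j), hJ i hi j hj, rfl⟩)

variable [IsDomain R]

theorem Polynomial.card_sub_natDegree_le_card_filter_eval_ne_zero (A : Finset R) {p : R[X]}
    (hp : p ≠ 0) : #A - p.natDegree ≤ #{x ∈ A | p.eval x ≠ 0} := by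
  have hzeros : #{x ∈ A | p.eval x = 0} ≤ p.natDegree :=
    calc #{x ∈ A | p.eval x = 0} ≤ #p.roots.toFinset :=
          card_le_card fun x hx => by simp_all [mem_roots hp]
      _ ≤ p.natDegree := (Multiset.toFinset_card_le _).trans (card_roots' p)
  have := card_filter_add_card_filter_not (s := A) fun x => p.eval x = 0
  simp only [ne_eq]
  omega

theorem Polynomial.card_sub_mul_card_sub_le_card_filter_evalEval_ne_zero (A B : Finset R)
    {P : R[X][X]} (hP : P ≠ 0) :
    (#A - P.leadingCoeff.natDegree) * (#B - P.natDegree) ≤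
      #{q ∈ A ×ˢ B | P.evalEval q.1 q.2 ≠ 0} := by
  set A' := {x ∈ A | P.leadingCoeff.eval x ≠ 0}
  have hfibre (x) (hx : x ∈ A') : #B - P.natDegree ≤ #{y ∈ B | P.evalEval x y ≠ 0} := by
    have hlc : evalRingHom x P.leadingCoeff ≠ 0 := (mem_filter.1 hx).2
    have hP' : P.map (evalRingHom x) ≠ 0 := by
      rw [← leadingCoeff_ne_zero, leadingCoeff_map_of_leadingCoeff_ne_zero _ hlc]
      exact hlc
    simpa only [natDegree_map_of_leadingCoeff_ne_zero _ hlc, map_evalRingHom_eval] using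
      card_sub_natDegree_le_card_filter_eval_ne_zero B hP'
  calc (#A - P.leadingCoeff.natDegree) * (#B - P.natDegree)
      ≤ #A' * (#B - P.natDegree) := Nat.mul_le_mul_right _
        (card_sub_natDegree_le_card_filter_eval_ne_zero A (leadingCoeff_ne_zero.2 hP))
    _ = ∑ _x ∈ A', (#B - P.natDegree) := by rw [sum_const, smul_eq_mul]
    _ ≤ ∑ x ∈ A', #{y ∈ B | P.evalEval x y ≠ 0} := sum_le_sum hfibre
    _ ≤ ∑ x ∈ A, #{y ∈ B | P.evalEval x y ≠ 0} := sum_le_sum_of_subset (filter_subset _ _)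
    _ = #{q ∈ A ×ˢ B | P.evalEval q.1 q.2 ≠ 0} := by
      simp only [card_filter, sum_product]

def puncturedSquare (r : ℕ) : Finset (ℕ × ℕ) :=
  (range r ×ˢ range r).erase (r - 1, r - 1)

theorem card_puncturedSquare {r : ℕ} (hr : 0 < r) : #(puncturedSquare r) = r ^ 2 - 1 := by
  rw [puncturedSquare, card_erase_of_mem (by simp [hr]), card_product, card_range, sq]

theorem Polynomial.le_card_filter_evalEval_ne_zero_of_support_puncturedSquare
    {A B : Finset R} {n r : ℕ} (hA : #A = n) (hB : #B = n) (hrn : r ≤ n) {P : R[X][X]} (hP : P ≠ 0)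
    (hsupp : ∀ i j, (P.coeff j).coeff i ≠ 0 → (i, j) ∈ puncturedSquare r) :
    (n - r + 1) * (n - r + 2) ≤ #{q ∈ A ×ˢ B | P.evalEval q.1 q.2 ≠ 0} := by
  have htop := hsupp P.leadingCoeff.natDegree P.natDegree
    (leadingCoeff_ne_zero.2 (leadingCoeff_ne_zero.2 hP))
  simp only [puncturedSquare, mem_erase, mem_product, mem_range, ne_eq, Prod.mk.injEq] at htop
  refine le_trans ?_ (card_sub_mul_card_sub_le_card_filter_evalEval_ne_zero A B hP)
  rw [hA, hB]
  by_cases ha : P.leadingCoeff.natDegree = r - 1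
  · exact Nat.mul_le_mul (by omega) (by omega)
  · rw [mul_comm]; exact Nat.mul_le_mul (by omega) (by omega)

end Bivariate

section Additive

variable {R : Type*} [CommRing R] {p : ℕ} {f : R[X]}

theorem Polynomial.eval_add_of_forall_mem_support_eq_pow [ExpChar R p]
    (hf : ∀ m ∈ f.support, ∃ k, m = p ^ k) (x y : R) :
    f.eval (x + y) = f.eval x + f.eval y := by
  simp only [eval_eq_sum, Polynomial.sum_def, ← sum_add_distrib]
  refine sum_congr rfl fun m hm => ?_
  obtain ⟨k, rfl⟩ := hf m hm
  rw [add_pow_expChar_pow, mul_add]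

theorem Polynomial.derivative_eq_C_coeff_one_of_forall_mem_support_eq_pow [CharP R p]
    (hf : ∀ m ∈ f.support, ∃ k, m = p ^ k) : derivative f = C (f.coeff 1) := by
  ext k
  rw [coeff_derivative, coeff_C]
  rcases Nat.eq_zero_or_pos k with rfl | hk
  · simp
  rw [if_neg hk.ne']
  by_cases hcoeff : f.coeff (k + 1) = 0
  · rw [hcoeff, zero_mul]
  obtain ⟨e, he⟩ := hf (k + 1) (mem_support_iff.2 hcoeff)
  have hcast : ((k + 1 : ℕ) : R) = 0 := by
    rw [CharP.cast_eq_zero_iff R p, he]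
    exact dvd_pow_self p (by rintro rfl; simp at he; omega)
  rw [← Nat.cast_succ, hcast, mul_zero]

end Additive

section Field

variable {F : Type*} [Field F]

theorem Polynomial.separable_of_derivative_eq_C {f : F[X]} {a : F} (h : derivative f = C a)
    (ha : a ≠ 0) : f.Separable :=
  (separable_def' f).2
    ⟨0, C a⁻¹, by rw [h, zero_mul, zero_add, ← C_mul, inv_mul_cancel₀ ha, C_1]⟩

theorem Polynomial.separable_X_sub_of_derivative_eq_C {f : F[X]} {a : F}
    (h : derivative f = C a) (ha : a ≠ 1) : (X - f).Separable :=
  separable_of_derivative_eq_C (by rw [derivative_sub, derivative_X, h, ← C_1, ← C_sub])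
    (sub_ne_zero.2 ha.symm)

theorem Polynomial.card_roots_toFinset_eq_natDegree {f : F[X]} (hsep : f.Separable)
    (hsplit : f.Splits) : #f.roots.toFinset = f.natDegree := by
  rw [Multiset.toFinset_card_of_nodup (nodup_roots hsep), hsplit.natDegree_eq_card_roots]

theorem Polynomial.eq_zero_of_degree_sum_smul_lt {ι : Type*} {s : Finset ι} {v : ι → F[X]}
    {c : ι → F} {i₀ : ι} (hi₀ : i₀ ∈ s) (hv₀ : v i₀ ≠ 0)
    (hv : ∀ i ∈ s, i ≠ i₀ → (v i).natDegree < (v i₀).natDegree)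
    (hdeg : (∑ i ∈ s, c i • v i).degree < (v i₀).natDegree) : c i₀ = 0 := by
  have hcoeff := coeff_eq_zero_of_degree_lt hdeg
  rw [finsetSum_coeff, sum_eq_single_of_mem i₀ hi₀ fun i hi hne => by
    rw [coeff_smul, coeff_eq_zero_of_natDegree_lt (hv i hi hne), smul_zero],
    coeff_smul, smul_eq_mul] at hcoeff
  exact (mul_eq_zero.1 hcoeff).resolve_right (leadingCoeff_ne_zero.2 hv₀)

theorem Bset_eq_image (f g : F[X]) (r : ℕ) :
    Bset f g r = (fun k : ℕ × ℕ => g ^ k.1 * f ^ k.2) '' ↑(range r ×ˢ range r) := by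
  ext w
  constructor
  · rintro ⟨i, j, hi, hj, rfl⟩
    exact ⟨(i, j), by simp [hi, hj], rfl⟩
  · rintro ⟨⟨i, j⟩, hk, rfl⟩
    simp only [coe_product, coe_range, Set.mem_prod, Set.mem_Iio] at hk
    exact ⟨i, j, hk.1, hk.2, rfl⟩

theorem span_Bset_inf_degreeLE {f g : F[X]} (hfg : g.natDegree = f.natDegree)
    (hf : 0 < f.natDegree) {r : ℕ} (hr : 2 ≤ r) :
    Submodule.span F (Bset f g r) ⊓
        degreeLE F (((2 * r - 3) * f.natDegree : ℕ) : WithBot ℕ) =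
      Submodule.span F ((fun k : ℕ × ℕ => g ^ k.1 * f ^ k.2) '' ↑(puncturedSquare r)) := by
  set n := f.natDegree
  have hf0 : f ≠ 0 := ne_zero_of_natDegree_gt hf
  have hg0 : g ≠ 0 := ne_zero_of_natDegree_gt (hfg ▸ hf)
  have hdeg (k : ℕ × ℕ) : (g ^ k.1 * f ^ k.2).natDegree = (k.1 + k.2) * n := by
    rw [natDegree_mul (pow_ne_zero _ hg0) (pow_ne_zero _ hf0), natDegree_pow, natDegree_pow, hfg,
      add_mul]
  apply le_antisymm
  · rintro w ⟨hwB, hwdeg⟩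
    rw [SetLike.mem_coe, Bset_eq_image, Submodule.mem_span_image_finset_iff_exists_fun'] at hwB
    obtain ⟨c, rfl⟩ := hwB
    have htop : c (r - 1, r - 1) = 0 := by
      refine eq_zero_of_degree_sum_smul_lt (v := fun k : ℕ × ℕ => g ^ k.1 * f ^ k.2)
        (show (r - 1, r - 1) ∈ range r ×ˢ range r by simp; omega)
        (mul_ne_zero (pow_ne_zero _ hg0) (pow_ne_zero _ hf0)) (fun k hk hne => ?_) ?_
      · simp only [mem_product, mem_range] at hk
        have : k.1 + k.2 < r - 1 + (r - 1) := by
          obtain ⟨a, b⟩ := k; simp only [ne_eq, Prod.mk.injEq] at hne; omega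
        rw [hdeg, hdeg]
        exact Nat.mul_lt_mul_of_pos_right this hf
      · refine (mem_degreeLE.1 hwdeg).trans_lt ?_
        rw [hdeg]
        exact_mod_cast Nat.mul_lt_mul_of_pos_right (by omega) hf
    rw [← sum_erase _ (by rw [htop, zero_smul])]
    exact (Submodule.mem_span_image_finset_iff_exists_fun' F).2 ⟨c, rfl⟩
  · rw [Submodule.span_le]
    rintro _ ⟨k, hk, rfl⟩
    simp only [puncturedSquare, coe_erase, Set.mem_sdiff, mem_coe, mem_product, mem_range,
      Set.mem_singleton_iff] at hk
    refine ⟨Submodule.subset_span ((Bset_eq_image f g r).symm ▸ ⟨k, by simpa using hk.1, rfl⟩),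
      mem_degreeLE.2 (degree_le_natDegree.trans ?_)⟩
    have : k.1 + k.2 ≤ 2 * r - 3 := by
      obtain ⟨a, b⟩ := k; simp only [Prod.mk.injEq] at hk; omega
    rw [hdeg]
    exact_mod_cast Nat.mul_le_mul_right n this

theorem hammingNorm_evalOn (S : Finset F) (w : F[X]) :
    hammingNorm (evalOn S w) = #{α ∈ S | w.eval α ≠ 0} := by
  simp only [hammingNorm, evalOn, LinearMap.pi_apply, leval_apply, univ_eq_attach]
  rw [filter_attach (fun α => w.eval α ≠ 0), card_map, card_attach]

end Field

section RootSum

variable {F : Type*} [Field F] {f : F[X]}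

theorem eval_add_of_mem_roots (hadd : ∀ x y, f.eval (x + y) = f.eval x + f.eval y) {β γ : F}
    (hβ : β ∈ f.roots) (hγ : γ ∈ (X - f).roots) :
    (X - f).eval (β + γ) = β ∧ f.eval (β + γ) = γ := by
  have hfβ : f.eval β = 0 := (mem_roots'.1 hβ).2
  have hfγ : f.eval γ = γ := by
    have := (mem_roots'.1 hγ).2
    rw [IsRoot, eval_sub, eval_X, sub_eq_zero] at this
    exact this.symm
  have hf : f.eval (β + γ) = γ := by rw [hadd, hfβ, hfγ, zero_add]
  exact ⟨by rw [eval_sub, eval_X, hf, add_sub_cancel_right], hf⟩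

theorem card_filter_rootSumSet (hadd : ∀ x y, f.eval (x + y) = f.eval x + f.eval y)
    (P : F → Prop) [DecidablePred P] :
    #{α ∈ rootSumSet f (X - f) | P α} =
      #{q ∈ f.roots.toFinset ×ˢ (X - f).roots.toFinset | P (q.1 + q.2)} := by
  rw [rootSumSet, filter_image, card_image_of_injOn]
  rintro ⟨β₁, γ₁⟩ h₁ ⟨β₂, γ₂⟩ h₂ (h : β₁ + γ₁ = β₂ + γ₂)
  simp only [coe_filter, mem_product, Multiset.mem_toFinset, Set.mem_ofPred_eq] at h₁ h₂
  obtain ⟨hg₁, hf₁⟩ := eval_add_of_mem_roots hadd h₁.1.1 h₁.1.2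
  obtain ⟨hg₂, hf₂⟩ := eval_add_of_mem_roots hadd h₂.1.1 h₂.1.2
  rw [h] at hg₁ hf₁
  exact Prod.ext (hg₁.symm.trans hg₂) (hf₁.symm.trans hf₂)

theorem hammingNorm_evalOn_rootSumSet_sum_smul
    (hadd : ∀ x y, f.eval (x + y) = f.eval x + f.eval y) (J : Finset (ℕ × ℕ))
    (c : ℕ × ℕ → F) :
    hammingNorm (evalOn (rootSumSet f (X - f)) (∑ k ∈ J, c k • ((X - f) ^ k.1 * f ^ k.2))) =
      #{q ∈ f.roots.toFinset ×ˢ (X - f).roots.toFinset |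
        (bivariateOfCoeffs J c).evalEval q.1 q.2 ≠ 0} := by
  rw [hammingNorm_evalOn, card_filter_rootSumSet hadd]
  refine congrArg card (filter_congr fun q hq => ?_)
  rw [mem_product, Multiset.mem_toFinset, Multiset.mem_toFinset] at hq
  obtain ⟨hg, hf⟩ := eval_add_of_mem_roots hadd hq.1 hq.2
  rw [eval_sum_smul_pow_mul_pow, hg, hf]

theorem le_hammingNorm_evalOn_rootSumSet_sum_smul
    (hadd : ∀ x y, f.eval (x + y) = f.eval x + f.eval y)
    (hZf : #f.roots.toFinset = f.natDegree) (hZg : #(X - f).roots.toFinset = f.natDegree)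
    {r : ℕ} (hrn : r ≤ f.natDegree) {c : ℕ × ℕ → F}
    (hc : bivariateOfCoeffs (puncturedSquare r) c ≠ 0) :
    (f.natDegree - r + 1) * (f.natDegree - r + 2) ≤
      hammingNorm (evalOn (rootSumSet f (X - f))
        (∑ k ∈ puncturedSquare r, c k • ((X - f) ^ k.1 * f ^ k.2))) := by
  rw [hammingNorm_evalOn_rootSumSet_sum_smul hadd]
  refine le_card_filter_evalEval_ne_zero_of_support_puncturedSquare hZf hZg hrn hc fun i j hij => ?_
  rw [coeff_coeff_bivariateOfCoeffs] at hij
  by_contra h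
  exact hij (if_neg h)

theorem linearIndepOn_evalOn_rootSumSet
    (hadd : ∀ x y, f.eval (x + y) = f.eval x + f.eval y)
    (hZf : #f.roots.toFinset = f.natDegree) (hZg : #(X - f).roots.toFinset = f.natDegree)
    {r : ℕ} (hrn : r ≤ f.natDegree) :
    LinearIndepOn F
      (evalOn (rootSumSet f (X - f)) ∘ fun k : ℕ × ℕ => (X - f) ^ k.1 * f ^ k.2)
      ↑(puncturedSquare r) := by
  rw [linearIndepOn_finset_iff]
  intro c hc k hk
  by_contra hck
  have hP : bivariateOfCoeffs (puncturedSquare r) c ≠ 0 := fun h => hck <| by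
    simpa [hk, h, eq_comm] using coeff_coeff_bivariateOfCoeffs (puncturedSquare r) c k.1 k.2
  have hpos := le_hammingNorm_evalOn_rootSumSet_sum_smul hadd hZf hZg hrn hP
  simp only [Function.comp_apply, ← map_smul, ← map_sum] at hc
  rw [hc, hammingNorm_zero] at hpos
  have : 0 < (f.natDegree - r + 1) * (f.natDegree - r + 2) := by positivity
  omega

theorem le_hammingNorm_of_mem_span
    (hadd : ∀ x y, f.eval (x + y) = f.eval x + f.eval y)
    (hZf : #f.roots.toFinset = f.natDegree) (hZg : #(X - f).roots.toFinset = f.natDegree)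
    {r : ℕ} (hrn : r ≤ f.natDegree) {v : ↥(rootSumSet f (X - f)) → F}
    (hv : v ∈ Submodule.span F ((evalOn (rootSumSet f (X - f)) ∘
      fun k : ℕ × ℕ => (X - f) ^ k.1 * f ^ k.2) '' ↑(puncturedSquare r)))
    (hv0 : v ≠ 0) :
    (f.natDegree - r + 1) * (f.natDegree - r + 2) ≤ hammingNorm v := by
  obtain ⟨c, rfl⟩ := (Submodule.mem_span_image_finset_iff_exists_fun' F).1 hv
  simp only [Function.comp_apply, ← map_smul, ← map_sum] at hv0 ⊢
  refine le_hammingNorm_evalOn_rootSumSet_sum_smul hadd hZf hZg hrn fun hP => hv0 ?_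
  rw [← hammingNorm_eq_zero, hammingNorm_evalOn_rootSumSet_sum_smul hadd, hP]
  simp

theorem hammingNorm_evalOn_rootSumSet_nodal_comp_mul_nodal_comp
    (hadd : ∀ x y, f.eval (x + y) = f.eval x + f.eval y) {T U : Finset F}
    (hT : T ⊆ f.roots.toFinset) (hU : U ⊆ (X - f).roots.toFinset) :
    hammingNorm (evalOn (rootSumSet f (X - f))
        ((Lagrange.nodal T id).comp (X - f) * (Lagrange.nodal U id).comp f)) =
      (#f.roots.toFinset - #T) * (#(X - f).roots.toFinset - #U) := by
  have hnodal (V : Finset F) (x : F) : (Lagrange.nodal V id).eval x ≠ 0 ↔ x ∉ V := by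
    simp [Lagrange.eval_nodal, prod_ne_zero_iff, sub_ne_zero]
  rw [hammingNorm_evalOn, card_filter_rootSumSet hadd, ← card_sdiff_of_subset hT,
    ← card_sdiff_of_subset hU, ← card_product, sdiff_eq_filter, sdiff_eq_filter,
    ← filter_product]
  refine congrArg card (filter_congr fun q hq => ?_)
  rw [mem_product, Multiset.mem_toFinset, Multiset.mem_toFinset] at hq
  obtain ⟨hg, hf⟩ := eval_add_of_mem_roots hadd hq.1 hq.2
  rw [eval_mul, eval_comp, eval_comp, hg, hf, mul_ne_zero_iff, hnodal, hnodal]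

theorem exists_mem_span_hammingNorm_eq
    (hadd : ∀ x y, f.eval (x + y) = f.eval x + f.eval y)
    (hZf : #f.roots.toFinset = f.natDegree) (hZg : #(X - f).roots.toFinset = f.natDegree)
    {r : ℕ} (hr : 2 ≤ r) (hrn : r ≤ f.natDegree) :
    ∃ v ∈ Submodule.span F ((evalOn (rootSumSet f (X - f)) ∘
        fun k : ℕ × ℕ => (X - f) ^ k.1 * f ^ k.2) '' ↑(puncturedSquare r)),
      v ≠ 0 ∧ hammingNorm v = (f.natDegree - r + 1) * (f.natDegree - r + 2) := by
  obtain ⟨T, hTZ, hT⟩ := exists_subset_card_eq (s := f.roots.toFinset) (n := r - 1) (by omega)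
  obtain ⟨U, hUZ, hU⟩ :=
    exists_subset_card_eq (s := (X - f).roots.toFinset) (n := r - 2) (by omega)
  have hw := comp_mul_comp_mem_span_image f (X - f) (Lagrange.nodal T id) (Lagrange.nodal U id)
    (J := puncturedSquare r) fun i hi j hj => by
      rw [Lagrange.natDegree_nodal, hT] at hi
      rw [Lagrange.natDegree_nodal, hU] at hj
      simp only [puncturedSquare, mem_erase, mem_product, mem_range, ne_eq, Prod.mk.injEq]
      omega
  have hwt := hammingNorm_evalOn_rootSumSet_nodal_comp_mul_nodal_comp hadd hTZ hUZ
  rw [hZf, hZg, hT, hU, show f.natDegree - (r - 1) = f.natDegree - r + 1 by omega,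
    show f.natDegree - (r - 2) = f.natDegree - r + 2 by omega] at hwt
  refine ⟨_, ?_, fun h => ?_, hwt⟩
  · rw [Set.image_comp, ← Submodule.map_span]
    exact Submodule.mem_map_of_mem hw
  rw [h, hammingNorm_zero] at hwt
  exact absurd hwt.symm (by positivity)

end RootSum

theorem stmt_12_general (p e : ℕ) (hp : p.Prime)
    (F : Type*) [Field F] [CharP F p]
    (f : F[X])
    (hflin : ∀ m ∈ f.support, ∃ i : ℕ, m = (p ^ e) ^ i)
    (ha0 : f.coeff 1 ≠ 0) (ha1 : f.coeff 1 ≠ 1)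
    (g : F[X]) (hg : g = X - f)
    (hfs : (f.map (RingHom.id F)).Splits) (hgs : (g.map (RingHom.id F)).Splits)
    (r : ℕ) (hr : 2 ≤ r) (hrn : r ≤ f.natDegree)
    (C : Submodule F (↥(rootSumSet f g) → F))
    (hC : C = Submodule.map (evalOn (rootSumSet f g))
      (Submodule.span F (Bset f g r) ⊓
        Polynomial.degreeLE F (((2 * r - 3) * f.natDegree : ℕ) : WithBot ℕ))) :
    Module.finrank F ↥C = r ^ 2 - 1 ∧
    IsLeast {w : ℕ | ∃ v ∈ C, v ≠ 0 ∧
        (Finset.univ.filter fun α : ↥(rootSumSet f g) => v α ≠ 0).card = w}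
      ((f.natDegree - r + 1) * (f.natDegree - r + 1 + 1)) := by
  subst hg hC
  have : Fact p.Prime := ⟨hp⟩
  have hpow (m) (hm : m ∈ f.support) : ∃ k, m = p ^ k :=
    let ⟨i, hi⟩ := hflin m hm
    ⟨e * i, hi.trans (pow_mul p e i).symm⟩
  have hderiv := derivative_eq_C_coeff_one_of_forall_mem_support_eq_pow hpow
  have hdegX : (X - f).natDegree = f.natDegree :=
    natDegree_sub_eq_right_of_natDegree_lt (by rw [natDegree_X]; omega)
  have hZf : #f.roots.toFinset = f.natDegree := card_roots_toFinset_eq_natDegree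
    (separable_of_derivative_eq_C hderiv ha0) (by simpa using hfs)
  have hZg : #(X - f).roots.toFinset = f.natDegree := hdegX ▸ card_roots_toFinset_eq_natDegree
    (separable_X_sub_of_derivative_eq_C hderiv ha1) (by simpa using hgs)
  have hadd := eval_add_of_forall_mem_support_eq_pow hpow
  rw [span_Bset_inf_degreeLE hdegX (by omega) hr, Submodule.map_span, ← Set.image_comp]
  refine ⟨?_, ?_, ?_⟩
  · rw [Set.image_eq_range,
      finrank_span_eq_card (linearIndepOn_evalOn_rootSumSet hadd hZf hZg hrn)]
    simpa only [coe_sort_coe, Fintype.card_coe] using card_puncturedSquare (by omega)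
  · exact exists_mem_span_hammingNorm_eq hadd hZf hZg hr hrn
  · rintro _ ⟨v, hv, hv0, rfl⟩
    exact le_hammingNorm_of_mem_span hadd hZf hZg hrn hv hv0

/-- one heavy parity.  Under the construction setup with `2 ≤ r ≤ 𝔫`
and `δ := 𝔫 − r + 1`, the evaluation code on `Z_f ⊕ Z_g` of
`{w ∈ span_F(B_{r²}) : deg w ≤ (2r−3)·𝔫}` has dimension `r² − 1` and minimum distance
exactly `δ(δ+1)`. -/
theorem stmt_12 (p e : ℕ) (hp : p.Prime) (he : 0 < e)
    (F : Type*) [Field F] [Fintype F] [CharP F p]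
    (f : F[X])
    (hflin : ∀ m ∈ f.support, ∃ i : ℕ, m = (p ^ e) ^ i)
    (hdeg : 1 < f.natDegree)
    (ha0 : f.coeff 1 ≠ 0) (ha1 : f.coeff 1 ≠ 1)
    (g : F[X]) (hg : g = X - f)
    (hfs : (f.map (RingHom.id F)).Splits) (hgs : (g.map (RingHom.id F)).Splits)
    (r : ℕ) (hr : 2 ≤ r) (hrn : r ≤ f.natDegree)
    (C : Submodule F (↥(rootSumSet f g) → F))
    (hC : C = Submodule.map (evalOn (rootSumSet f g))
      (Submodule.span F (Bset f g r) ⊓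
        Polynomial.degreeLE F (((2 * r - 3) * f.natDegree : ℕ) : WithBot ℕ))) :
    Module.finrank F ↥C = r ^ 2 - 1 ∧
    IsLeast {w : ℕ | ∃ v ∈ C, v ≠ 0 ∧
        (Finset.univ.filter fun α : ↥(rootSumSet f g) => v α ≠ 0).card = w}
      ((f.natDegree - r + 1) * (f.natDegree - r + 1 + 1)) :=
  stmt_12_general p e hp F f hflin ha0 ha1 g hg hfs hgs r hr hrn C hC
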